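/- Let A be a Banach algebra with a bounded left approximate identity and B a Banach A-bimodule with A·B** ⊆ B and B**·A ⊆ B. If every continuous derivation from A into B* is inner, then every continuous derivation from A into B^(2n+1) is inner for each n ≥ 0. -/

import Mathlib

open ContinuousLinearMap NormedSpace

noncomputable section

instance instNACGStrongDual (E : Type) [NormedAddCommGroup E] [NormedSpace ℝ E] :
    NormedAddCommGroup (StrongDual ℝ E) := inferInstance

instance instNSStrongDual (E : Type) [NormedAddCommGroup E] [NormedSpace ℝ E] :
    NormedSpace ℝ (StrongDual ℝ E) := inferInstance

section Defs

variable {X Y Z W : Type} [NormedAddCommGroup X] [NormedSpace ℝ X]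
  [NormedAddCommGroup Y] [NormedSpace ℝ Y] [NormedAddCommGroup Z] [NormedSpace ℝ Z]
  [NormedAddCommGroup W] [NormedSpace ℝ W]

/-- The first adjoint `m^*` of a bounded bilinear map `m : X × Y → Z`,
as a map `Z^* × X → Y^*`, `⟨m^*(z',x), y⟩ = ⟨z', m(x,y)⟩`. -/
def adj1 (m : X →L[ℝ] Y →L[ℝ] Z) :
    StrongDual ℝ Z →L[ℝ] X →L[ℝ] StrongDual ℝ Y :=
  (((ContinuousLinearMap.compL ℝ X (Y →L[ℝ] Z) (StrongDual ℝ Y)).flip m).comp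
    (ContinuousLinearMap.compL ℝ Y Z ℝ))

@[simp] lemma adj1_apply (m : X →L[ℝ] Y →L[ℝ] Z) (z' : StrongDual ℝ Z) (x : X) (y : Y) :
    adj1 m z' x y = z' (m x y) := rfl

/-- The first (left) Arens extension `m^{***} : X^{**} × Y^{**} → Z^{**}` of a
bounded bilinear map `m : X × Y → Z`. -/
def arens (m : X →L[ℝ] Y →L[ℝ] Z) :
    StrongDual ℝ (StrongDual ℝ X) →L[ℝ] StrongDual ℝ (StrongDual ℝ Y) →L[ℝ] StrongDual ℝ (StrongDual ℝ Z) :=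
  adj1 (adj1 (adj1 m))

/-- The adjoint (dual map) of a bounded linear map. -/
def dualMap' (D : X →L[ℝ] Y) : StrongDual ℝ Y →L[ℝ] StrongDual ℝ X :=
  (ContinuousLinearMap.compL ℝ X Y ℝ).flip D

@[simp] lemma dualMap'_apply (D : X →L[ℝ] Y) (g : StrongDual ℝ Y) (x : X) :
    dualMap' D g x = g (D x) := rfl

/-- The second adjoint `D'' : X^{**} → Y^{**}` of a bounded linear map. -/
def bidualMap (D : X →L[ℝ] Y) : StrongDual ℝ (StrongDual ℝ X) →L[ℝ] StrongDual ℝ (StrongDual ℝ Y) :=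
  dualMap' (dualMap' D)

/-- Given an action `t : A × X → X`, the transposed action on the dual `X^*`:
`(dualAct t) a f = f ∘ (t a)`. -/
def dualAct (t : W →L[ℝ] X →L[ℝ] X) : W →L[ℝ] StrongDual ℝ X →L[ℝ] StrongDual ℝ X :=
  ((ContinuousLinearMap.compL ℝ X X ℝ).flip).comp t

@[simp] lemma dualAct_apply (t : W →L[ℝ] X →L[ℝ] X) (a : W) (f : StrongDual ℝ X) (x : X) :
    dualAct t a f x = f (t a x) := rfl

/-- `D : A → X` is a derivation with respect to the multiplication `mul'` on `A`
and the left action `l` and right action `r` (`r a x` means `x · a`) of `A` on `X`. -/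
def IsDer {A' : Type} [NormedAddCommGroup A'] [NormedSpace ℝ A']
    (mul' : A' →L[ℝ] A' →L[ℝ] A') (l r : A' →L[ℝ] X →L[ℝ] X) (D : A' →L[ℝ] X) : Prop :=
  ∀ a b : A', D (mul' a b) = l a (D b) + r b (D a)

/-- `D : A → X` is an inner derivation: `D a = a·x - x·a` for some `x`. -/
def IsInner {A' : Type} [NormedAddCommGroup A'] [NormedSpace ℝ A']
    (l r : A' →L[ℝ] X →L[ℝ] X) (D : A' →L[ℝ] X) : Prop :=
  ∃ x : X, ∀ a : A', D a = l a x - r a x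

/-- The bimodule axioms for actions `l`, `r` of an algebra with multiplication `mul'`. -/
def IsBimod {A' : Type} [NormedAddCommGroup A'] [NormedSpace ℝ A']
    (mul' : A' →L[ℝ] A' →L[ℝ] A') (l r : A' →L[ℝ] X →L[ℝ] X) : Prop :=
  (∀ a b x, l (mul' a b) x = l a (l b x)) ∧
  (∀ a b x, r (mul' a b) x = r b (r a x)) ∧
  (∀ a b x, l a (r b x) = r b (l a x))

/-- weak*-to-weak* continuity of a map between dual spaces. -/
def WStarCont (f : StrongDual ℝ X → StrongDual ℝ Y) : Prop :=
  ∀ y : Y, Continuous fun φ : WeakDual ℝ X => f φ y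

end Defs

/-- A packaged Banach `A`-bimodule (used to form iterated duals). -/
structure ModPk (A : Type) [NormedAddCommGroup A] [NormedSpace ℝ A] : Type 1 where
  X : Type
  [grp : NormedAddCommGroup X]
  [mod : NormedSpace ℝ X]
  l : A →L[ℝ] X →L[ℝ] X
  r : A →L[ℝ] X →L[ℝ] X

attribute [instance] ModPk.grp ModPk.mod

variable {A : Type} [NormedAddCommGroup A] [NormedSpace ℝ A]

/-- The canonical dual of a packaged bimodule. -/
def ModPk.dual (P : ModPk A) : ModPk A :=
  ⟨StrongDual ℝ P.X, dualAct P.r, dualAct P.l⟩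

/-- The `n`-th iterated dual of a packaged bimodule. -/
def ModPk.iter (P : ModPk A) : ℕ → ModPk A
  | 0 => P
  | n+1 => (P.iter n).dual

/-- A "level": an algebra (given by its bilinear multiplication) together with a bimodule. -/
structure Lvl : Type 1 where
  Alg : Type
  [g1 : NormedAddCommGroup Alg]
  [m1 : NormedSpace ℝ Alg]
  Mod : Type
  [g2 : NormedAddCommGroup Mod]
  [m2 : NormedSpace ℝ Mod]
  mul : Alg →L[ℝ] Alg →L[ℝ] Alg
  l : Alg →L[ℝ] Mod →L[ℝ] Mod
  r : Alg →L[ℝ] Mod →L[ℝ] Mod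

attribute [instance] Lvl.g1 Lvl.m1 Lvl.g2 Lvl.m2

/-- Passing to second duals: `A^{**}` with the first Arens product, acting on `B^{**}`
via the Arens extensions `π_ℓ^{***}` and `π_r^{***}` of the module actions. -/
def Lvl.double (Q : Lvl) : Lvl where
  Alg := StrongDual ℝ (StrongDual ℝ Q.Alg)
  Mod := StrongDual ℝ (StrongDual ℝ Q.Mod)
  mul := arens Q.mul
  l := arens Q.l
  r := (arens Q.r.flip).flip

/-- Iterated even duals: `Lvl.iter Q n` is the level `(A^{(2n)}, B^{(2n)})`. -/
def Lvl.iter (Q : Lvl) : ℕ → Lvl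
  | 0 => Q
  | n+1 => (Q.iter n).double

/-- The canonical embedding `A → A^{(2n)}`. -/
def Lvl.embA (Q : Lvl) : (n : ℕ) → Q.Alg →L[ℝ] (Q.iter n).Alg
  | 0 => ContinuousLinearMap.id ℝ _
  | n+1 => (inclusionInDoubleDual ℝ ((Q.iter n).Alg)).comp (Q.embA n)

/-- The canonical embedding `B → B^{(2n)}`. -/
def Lvl.embM (Q : Lvl) : (n : ℕ) → Q.Mod →L[ℝ] (Q.iter n).Mod
  | 0 => ContinuousLinearMap.id ℝ _
  | n+1 => (inclusionInDoubleDual ℝ ((Q.iter n).Mod)).comp (Q.embM n)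

/-- The left-topological-center condition `Z^ℓ_{A^{(2n+2)}}(B^{(2n+2)}) = B^{(2n+2)}`,
stated at the double of a level `Q`: for each `b` in the second-dual module, the map
`a ↦ b·a` is weak*-to-weak* continuous. -/
def Lvl.doubleZl (Q : Lvl) : Prop :=
  ∀ b : (Q.double).Mod, WStarCont (X := StrongDual ℝ Q.Alg) (Y := StrongDual ℝ Q.Mod)
    (fun a => (Q.double).r a b)

/-- The base level of a Banach algebra `A` with a Banach `A`-bimodule `B`. -/
def lvlOf (A : Type) [NormedRing A] [NormedAlgebra ℝ A]
    (B : Type) [NormedAddCommGroup B] [NormedSpace ℝ B]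
    (l r : A →L[ℝ] B →L[ℝ] B) : Lvl :=
  Lvl.mk A B (ContinuousLinearMap.mul ℝ A) l r

/-! Write `X_k` for the `k`-th dual of `B`. Restriction to `B ⊆ B**` and the canonical embedding
give `A`-module maps `p : X_3 → X_1` and `j : X_1 → X_3`, and since `a·G` and `G·a` lie in `B`
for `G ∈ B**`, the actions of `A` on `X_3` factor through `j ∘ p`. Taking second adjoints
propagates such a factorization two levels up, so the actions on every `X_{2n+1}` factor through
`X_1 = B*`. For a derivation `D : A → X_{2n+1}`, the derivation `p ∘ D` into `B*` is inner, say
`ad x`; the factorization gives `D (a b) = j (p (D (a b))) = ad (j x) (a b)`, and products are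
dense in `A` because of the left approximate identity, so `D = ad (j x)`. -/

namespace ModPk

structure IsHom (P Q : ModPk A) (T : P.X →L[ℝ] Q.X) : Prop where
  map_l : ∀ a x, T (P.l a x) = Q.l a (T x)
  map_r : ∀ a x, T (P.r a x) = Q.r a (T x)

structure ActsThrough (P : ModPk A) (π : P.X →L[ℝ] P.X) : Prop where
  l_apply : ∀ a x, P.l a (π x) = P.l a x
  r_apply : ∀ a x, P.r a (π x) = P.r a x

def FactorsThrough (P Q : ModPk A) : Prop :=
  ∃ (p : P.X →L[ℝ] Q.X) (j : Q.X →L[ℝ] P.X),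
    P.IsHom Q p ∧ Q.IsHom P j ∧ P.ActsThrough (j.comp p)

variable {P Q R : ModPk A}

theorem IsHom.comp {S : Q.X →L[ℝ] R.X} {T : P.X →L[ℝ] Q.X} (hS : Q.IsHom R S)
    (hT : P.IsHom Q T) : P.IsHom R (S.comp T) where
  map_l a x := by simp only [comp_apply, hT.map_l, hS.map_l]
  map_r a x := by simp only [comp_apply, hT.map_r, hS.map_r]

-- `P.dual.X` is `StrongDual ℝ P.X` only after unfolding `ModPk.dual`, so elements of dual
-- modules are coerced to functionals by `show StrongDual ℝ _ from _`.
theorem IsHom.dual {T : P.X →L[ℝ] Q.X} (hT : P.IsHom Q T) :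
    Q.dual.IsHom P.dual (dualMap' T) where
  map_l a f := ContinuousLinearMap.ext fun x =>
    congrArg (show StrongDual ℝ Q.X from f) (hT.map_r a x).symm
  map_r a f := ContinuousLinearMap.ext fun x =>
    congrArg (show StrongDual ℝ Q.X from f) (hT.map_l a x).symm

theorem isHom_inclusionInDoubleDual (P : ModPk A) :
    P.IsHom P.dual.dual (inclusionInDoubleDual ℝ P.X) :=
  ⟨fun _ _ => rfl, fun _ _ => rfl⟩

theorem ActsThrough.dual_dual {π : P.X →L[ℝ] P.X} (hπ : P.ActsThrough π) :
    P.dual.dual.ActsThrough (bidualMap π) where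
  l_apply a F := ContinuousLinearMap.ext fun g => by
    have : dualMap' π (dualAct P.l a g) = dualAct P.l a g :=
      ContinuousLinearMap.ext fun x => congrArg (show StrongDual ℝ P.X from g) (hπ.l_apply a x)
    exact congrArg (show StrongDual ℝ (StrongDual ℝ P.X) from F) this
  r_apply a F := ContinuousLinearMap.ext fun g => by
    have : dualMap' π (dualAct P.r a g) = dualAct P.r a g :=
      ContinuousLinearMap.ext fun x => congrArg (show StrongDual ℝ P.X from g) (hπ.r_apply a x)
    exact congrArg (show StrongDual ℝ (StrongDual ℝ P.X) from F) this

theorem FactorsThrough.refl (P : ModPk A) : P.FactorsThrough P :=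
  ⟨.id ℝ _, .id ℝ _, ⟨fun _ _ => rfl, fun _ _ => rfl⟩, ⟨fun _ _ => rfl, fun _ _ => rfl⟩,
    ⟨fun _ _ => rfl, fun _ _ => rfl⟩⟩

theorem FactorsThrough.trans (hPQ : P.FactorsThrough Q) (hQR : Q.FactorsThrough R) :
    P.FactorsThrough R := by
  obtain ⟨p, j, hp, hj, hPjp⟩ := hPQ
  obtain ⟨p', j', hp', hj', hQjp⟩ := hQR
  refine ⟨p'.comp p, j.comp j', hp'.comp hp, hj.comp hj', ?_, ?_⟩ <;> intro a x
  · calc P.l a (j (j' (p' (p x)))) = j (Q.l a (j' (p' (p x)))) := (hj.map_l a _).symm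
      _ = j (Q.l a (p x)) := congrArg j (hQjp.l_apply a (p x))
      _ = P.l a x := by rw [hj.map_l, ← comp_apply j p, hPjp.l_apply]
  · calc P.r a (j (j' (p' (p x)))) = j (Q.r a (j' (p' (p x)))) := (hj.map_r a _).symm
      _ = j (Q.r a (p x)) := congrArg j (hQjp.r_apply a (p x))
      _ = P.r a x := by rw [hj.map_r, ← comp_apply j p, hPjp.r_apply]

theorem FactorsThrough.dual_dual (h : P.FactorsThrough Q) :
    P.dual.dual.FactorsThrough Q.dual.dual := by
  obtain ⟨p, j, hp, hj, hjp⟩ := h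
  exact ⟨bidualMap p, bidualMap j, hp.dual.dual, hj.dual.dual, hjp.dual_dual⟩

theorem dual_dual_dual_factorsThrough_dual
    (hl : ∀ a G, ∃ x, P.dual.dual.l a G = inclusionInDoubleDual ℝ P.X x)
    (hr : ∀ a G, ∃ x, P.dual.dual.r a G = inclusionInDoubleDual ℝ P.X x) :
    P.dual.dual.dual.FactorsThrough P.dual := by
  refine ⟨dualMap' (inclusionInDoubleDual ℝ P.X), inclusionInDoubleDual ℝ P.dual.X,
    (isHom_inclusionInDoubleDual P).dual, isHom_inclusionInDoubleDual P.dual, ?_, ?_⟩ <;>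
    intro a f <;> refine ContinuousLinearMap.ext fun G => ?_
  · obtain ⟨x, hx⟩ := hr a G
    show inclusionInDoubleDual ℝ P.dual.X (dualMap' (inclusionInDoubleDual ℝ P.X) f)
      (P.dual.dual.r a G) = (show StrongDual ℝ P.dual.dual.X from f) (P.dual.dual.r a G)
    rw [hx]
    rfl
  · obtain ⟨x, hx⟩ := hl a G
    show inclusionInDoubleDual ℝ P.dual.X (dualMap' (inclusionInDoubleDual ℝ P.X) f)
      (P.dual.dual.l a G) = (show StrongDual ℝ P.dual.dual.X from f) (P.dual.dual.l a G)
    rw [hx]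
    rfl

theorem iter_odd_factorsThrough_iter_one
    (hl : ∀ a G, ∃ x, (P.iter 2).l a G = inclusionInDoubleDual ℝ P.X x)
    (hr : ∀ a G, ∃ x, (P.iter 2).r a G = inclusionInDoubleDual ℝ P.X x) (n : ℕ) :
    (P.iter (2 * n + 1)).FactorsThrough (P.iter 1) := by
  induction n with
  | zero => exact .refl _
  | succ n ih => exact ih.dual_dual.trans (dual_dual_dual_factorsThrough_dual hl hr)

section Derivations

variable (mul' : A →L[ℝ] A →L[ℝ] A)

theorem IsHom.isDer_comp {T : P.X →L[ℝ] Q.X} (hT : P.IsHom Q T) {D : A →L[ℝ] P.X}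
    (hD : IsDer mul' P.l P.r D) : IsDer mul' Q.l Q.r (T.comp D) := fun a b => by
  simp only [comp_apply, hD a b, map_add, hT.map_l, hT.map_r]

theorem isDer_apply_mul_eq_of_actsThrough {p : P.X →L[ℝ] Q.X} {j : Q.X →L[ℝ] P.X}
    (hp : P.IsHom Q p) (hj : Q.IsHom P j) (hjp : P.ActsThrough (j.comp p)) {D : A →L[ℝ] P.X}
    (hD : IsDer mul' P.l P.r D) (a b : A) : D (mul' a b) = j (p (D (mul' a b))) :=
  calc D (mul' a b) = P.l a (j (p (D b))) + P.r b (j (p (D a))) := by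
        rw [hD a b, ← comp_apply j p, hjp.l_apply, ← comp_apply j p, hjp.r_apply]
    _ = j (Q.l a (p (D b)) + Q.r b (p (D a))) := by rw [map_add, hj.map_l, hj.map_r]
    _ = j (p (D (mul' a b))) := by rw [hD a b, map_add p, hp.map_l, hp.map_r]

theorem FactorsThrough.isInner_of_isDer (hPQ : P.FactorsThrough Q)
    (hmul : DenseRange fun c : A × A => mul' c.1 c.2)
    (hQ : ∀ D : A →L[ℝ] Q.X, IsDer mul' Q.l Q.r D → IsInner Q.l Q.r D)
    {D : A →L[ℝ] P.X} (hD : IsDer mul' P.l P.r D) : IsInner P.l P.r D := by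
  obtain ⟨p, j, hp, hj, hjp⟩ := hPQ
  obtain ⟨x, hx⟩ := hQ _ (hp.isDer_comp mul' hD)
  have hprod : ∀ a b, D (mul' a b) = P.l (mul' a b) (j x) - P.r (mul' a b) (j x) := by
    intro a b
    rw [isDer_apply_mul_eq_of_actsThrough mul' hp hj hjp hD, ← comp_apply p D, hx, map_sub,
      hj.map_l, hj.map_r]
  have hD_eq : D = P.l.flip (j x) - P.r.flip (j x) :=
    DFunLike.coe_injective <| hmul.equalizer D.continuous (by fun_prop) <| funext fun c => by
      simp [hprod]
  exact ⟨j x, fun a => by simp [hD_eq]⟩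

end Derivations

end ModPk

theorem denseRange_mul_of_tendsto_mul_left {M ι : Type*} [TopologicalSpace M] [Mul M]
    {F : Filter ι} [F.NeBot] {e : ι → M}
    (he : ∀ a, Filter.Tendsto (fun i => e i * a) F (nhds a)) :
    DenseRange fun c : M × M => c.1 * c.2 :=
  fun a => mem_closure_of_tendsto (he a) (Filter.Eventually.of_forall fun i => ⟨(e i, a), rfl⟩)

theorem stmt5_general (A : Type) [NormedRing A] [NormedAlgebra ℝ A]
    (B : Type) [NormedAddCommGroup B] [NormedSpace ℝ B]
    (l r : A →L[ℝ] B →L[ℝ] B)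
    -- `A` has a bounded left approximate identity
    (hBLAI : ∃ (ι : Type) (F : Filter ι) (e : ι → A), F.NeBot ∧
      (∃ C : ℝ, ∀ i, ‖e i‖ ≤ C) ∧ ∀ a : A, Filter.Tendsto (fun i => e i * a) F (nhds a))
    -- `A·B** ⊆ B` and `B**·A ⊆ B`
    (hl2 : ∀ (a : A) (G : ((ModPk.mk B l r).iter 2).X),
      ∃ b : B, ((ModPk.mk B l r).iter 2).l a G = inclusionInDoubleDual ℝ B b)
    (hr2 : ∀ (a : A) (G : ((ModPk.mk B l r).iter 2).X),
      ∃ b : B, ((ModPk.mk B l r).iter 2).r a G = inclusionInDoubleDual ℝ B b)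
    -- `H¹(A, B*) = 0`
    (h1 : ∀ D : A →L[ℝ] ((ModPk.mk B l r).iter 1).X,
      IsDer (ContinuousLinearMap.mul ℝ A) ((ModPk.mk B l r).iter 1).l ((ModPk.mk B l r).iter 1).r D →
      IsInner ((ModPk.mk B l r).iter 1).l ((ModPk.mk B l r).iter 1).r D) :
    -- `H¹(A, B^(2n+1)) = 0` for every `n`
    ∀ (n : ℕ) (D : A →L[ℝ] ((ModPk.mk B l r).iter (2*n+1)).X),
      IsDer (ContinuousLinearMap.mul ℝ A) ((ModPk.mk B l r).iter (2*n+1)).l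
        ((ModPk.mk B l r).iter (2*n+1)).r D →
      IsInner ((ModPk.mk B l r).iter (2*n+1)).l ((ModPk.mk B l r).iter (2*n+1)).r D := by
  intro n D hD
  obtain ⟨ι, F, e, hF, -, he⟩ := hBLAI
  exact (ModPk.iter_odd_factorsThrough_iter_one hl2 hr2 n).isInner_of_isDer _
    (denseRange_mul_of_tendsto_mul_left he) h1 hD

/-- **Corollary 2-6 (i).** Let `A` be a Banach algebra with a bounded left approximate
identity, and `B` a Banach `A`-bimodule with `A·B** ⊆ B` and `B**·A ⊆ B`. If every
continuous derivation `A → B*` is inner, then for each `n ≥ 0` every continuous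
derivation `A → B^(2n+1)` is inner. -/
theorem stmt5 (A : Type) [NormedRing A] [NormedAlgebra ℝ A] [CompleteSpace A]
    (B : Type) [NormedAddCommGroup B] [NormedSpace ℝ B] [CompleteSpace B]
    (l r : A →L[ℝ] B →L[ℝ] B)
    (hbim : IsBimod (ContinuousLinearMap.mul ℝ A) l r)
    -- `A` has a bounded left approximate identity
    (hBLAI : ∃ (ι : Type) (F : Filter ι) (e : ι → A), F.NeBot ∧
      (∃ C : ℝ, ∀ i, ‖e i‖ ≤ C) ∧ ∀ a : A, Filter.Tendsto (fun i => e i * a) F (nhds a))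
    -- `A·B** ⊆ B` and `B**·A ⊆ B`
    (hl2 : ∀ (a : A) (G : ((ModPk.mk B l r).iter 2).X),
      ∃ b : B, ((ModPk.mk B l r).iter 2).l a G = inclusionInDoubleDual ℝ B b)
    (hr2 : ∀ (a : A) (G : ((ModPk.mk B l r).iter 2).X),
      ∃ b : B, ((ModPk.mk B l r).iter 2).r a G = inclusionInDoubleDual ℝ B b)
    -- `H¹(A, B*) = 0`
    (h1 : ∀ D : A →L[ℝ] ((ModPk.mk B l r).iter 1).X,
      IsDer (ContinuousLinearMap.mul ℝ A) ((ModPk.mk B l r).iter 1).l ((ModPk.mk B l r).iter 1).r D →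
      IsInner ((ModPk.mk B l r).iter 1).l ((ModPk.mk B l r).iter 1).r D) :
    -- `H¹(A, B^(2n+1)) = 0` for every `n`
    ∀ (n : ℕ) (D : A →L[ℝ] ((ModPk.mk B l r).iter (2*n+1)).X),
      IsDer (ContinuousLinearMap.mul ℝ A) ((ModPk.mk B l r).iter (2*n+1)).l
        ((ModPk.mk B l r).iter (2*n+1)).r D →
      IsInner ((ModPk.mk B l r).iter (2*n+1)).l ((ModPk.mk B l r).iter (2*n+1)).r D :=
  stmt5_general A B l r hBLAI hl2 hr2 h1
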